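/- arXiv:2403.16284 — 2 statements merged into one kernel-verified Lean document; each statement's English description precedes it below -/
import Mathlib

section
/- Let f be a natural number with f ≥ 1, let b and m be integers with b ≥ 2 and m ≥ 2, and let a be an integer with 1 ≤ a < b. Then there exists a non-disjoint (b^m f, m, a b^{m−1} f, a² b^{m−2} f)-PSEDF in ℤ_{b^m f}. -/
/-- The external difference multiset `Δ(A,B) = {a - b : a ∈ A, b ∈ B}` (with multiplicity). -/
def extDiff {G : Type*} [AddGroup G] (A B : Finset G) : Multiset G :=
  A.val.bind fun a => B.val.map fun b => a - b

/-!
Write `N = bᵐf` and read `x ∈ ℤ/N` in the mixed radix with place values `f, bf, …, b^{m-1}f`.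
The `k`-th block is the set of `x` whose digit at place value `bᵏf` is less than `a`.
For `i < j`, membership of `g + y` in block `i` depends only on `y mod b^{i+1}f`, while among
the `y` with a prescribed residue mod `b^{i+1}f` a fixed number lie in block `j`: the digit of
`y` at `bʲf` runs uniformly through `0, …, b-1` as the higher part of `y` varies. Hence every
`g` is hit equally often by the differences of the two blocks.
-/

open Finset

section extDiff

variable {G : Type*} [AddGroup G]

lemma extDiff_eq_map_product (A B : Finset G) :
    extDiff A B = (A ×ˢ B).val.map fun p => p.1 - p.2 := by
  rw [extDiff, product_val]
  simp only [SProd.sprod, Multiset.product, Multiset.map_bind, Multiset.map_map,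
    Function.comp_def]

variable [DecidableEq G]

lemma count_extDiff (A B : Finset G) (g : G) :
    (extDiff A B).count g = #{y ∈ B | g + y ∈ A} := by
  rw [extDiff_eq_map_product, Multiset.count_map, ← filter_val, ← card_def]
  refine card_nbij' Prod.snd (fun y => (g + y, y)) ?_ ?_ ?_ ?_ <;> intro p <;>
    simp +contextual [eq_sub_iff_add_eq]

lemma extDiff_eq_nsmul_univ [Fintype G] {A B : Finset G} {l : ℕ}
    (h : ∀ g, #{y ∈ B | g + y ∈ A} = l) : extDiff A B = l • univ.val := by
  ext g
  rw [count_extDiff, h, Multiset.count_nsmul, Multiset.count_univ, mul_one]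

lemma card_filter_add_mem_comm (A B : Finset G) (g : G) :
    #{y ∈ B | g + y ∈ A} = #{x ∈ A | -g + x ∈ B} :=
  card_nbij' (g + ·) (-g + ·) (by intro; simp +contextual) (by intro; simp +contextual)
    (by intro; simp) (by intro; simp)

lemma card_filter_add_mem_of_preimage {Q F : Type*} [AddGroup Q] [DecidableEq Q]
    [FunLike F G Q] [AddHomClass F G Q] (π : F) {A B : Finset G} {S : Finset Q}
    (hA : ∀ x, x ∈ A ↔ π x ∈ S) {c : ℕ} (hB : ∀ q, #{y ∈ B | π y = q} = c) (g : G) :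
    #{y ∈ B | g + y ∈ A} = #S * c := by
  have hmaps : Set.MapsTo (fun y => π g + π y) ↑({y ∈ B | g + y ∈ A}) ↑S := by
    intro y hy
    rw [mem_coe, mem_filter, hA, map_add] at hy
    exact hy.2
  rw [card_eq_sum_card_fiberwise hmaps, ← smul_eq_mul, ← sum_const]
  refine sum_congr rfl fun q hq => ?_
  rw [filter_filter, ← hB (-π g + q)]
  congr 1
  refine filter_congr fun y _ => ?_
  rw [hA, map_add, eq_neg_add_iff_add_eq]
  exact ⟨And.right, fun h => ⟨h ▸ hq, h⟩⟩

end extDiff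

lemma Nat.count_div_mod_lt_mul (P b : ℕ) {a : ℕ} (hab : a ≤ b) :
    Nat.count (fun t => t / P % b < a) (P * b) = P * a := by
  rcases P.eq_zero_or_pos with rfl | hP
  · simp
  rw [Nat.count_eq_card_filter_range, ← card_range (P * a)]
  congr 1
  ext t
  have hta := Nat.div_lt_iff_lt_mul hP (x := t) (y := a)
  have htb := Nat.div_lt_iff_lt_mul hP (x := t) (y := b)
  have hmod : t / P < b → t / P % b = t / P := Nat.mod_eq_of_lt
  have hPab : a * P ≤ b * P := Nat.mul_le_mul_right P hab
  simp only [mem_filter, mem_range, mul_comm P]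
  omega

lemma Nat.count_div_mod_lt (P b L : ℕ) {a : ℕ} (hab : a ≤ b) :
    Nat.count (fun t => t / P % b < a) (P * b * L) = P * a * L := by
  induction L with
  | zero => simp
  | succ L ih =>
    have hshift (k : ℕ) : (P * b * L + k) / P % b = k / P % b := by
      rcases P.eq_zero_or_pos with rfl | hP
      · simp
      rw [mul_assoc, Nat.mul_add_div hP, Nat.mul_add_mod]
    simp only [mul_add_one, Nat.count_add, ih, hshift, Nat.count_div_mod_lt_mul P b hab]

namespace ZMod

lemma card_filter_val (n : ℕ) [NeZero n] (p : ℕ → Prop) [DecidablePred p] :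
    #{x : ZMod n | p x.val} = Nat.count p n := by
  rw [Nat.count_eq_card_filter_range]
  refine card_nbij' val (fun t => (t : ZMod n)) ?_ ?_ ?_ ?_
  · intro x hx
    simp_all [val_lt]
  · intro t ht
    simp_all [Nat.mod_eq_of_lt]
  · intro x _
    simp
  · intro t ht
    simp_all [Nat.mod_eq_of_lt]

lemma val_ringHom_apply {n M : ℕ} [NeZero n] (π : ZMod n →+* ZMod M) (x : ZMod n) :
    (π x).val = x.val % M := by
  conv_lhs => rw [← natCast_zmod_val x]
  rw [map_natCast, val_natCast]

end ZMod

def digitLtSet (n K b a : ℕ) [NeZero n] : Finset (ZMod n) :=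
  {x | x.val / K % b < a}

lemma card_digitLtSet {n K b L a : ℕ} [NeZero n] (hn : n = K * b * L) (hab : a ≤ b) :
    #(digitLtSet n K b a) = K * a * L := by
  rw [digitLtSet, ZMod.card_filter_val n (fun t => t / K % b < a), hn,
    Nat.count_div_mod_lt K b L hab]

lemma mem_digitLtSet_iff_ringHom {n K b a : ℕ} [NeZero n] [NeZero (K * b)]
    (π : ZMod n →+* ZMod (K * b)) (x : ZMod n) :
    x ∈ digitLtSet n K b a ↔ π x ∈ digitLtSet (K * b) K b a := by
  simp only [digitLtSet, mem_filter, mem_univ, true_and, ZMod.val_ringHom_apply,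
    Nat.mod_mul_right_div_self, Nat.mod_mod]

lemma card_digitLtSet_fiber {n M P b L a : ℕ} [NeZero n] [NeZero M] (hn : n = M * (P * b * L))
    (hab : a ≤ b) (π : ZMod n →+* ZMod M) (q : ZMod M) :
    #{y ∈ digitLtSet n (M * P) b a | π y = q} = P * a * L := by
  rw [← Nat.count_div_mod_lt P b L hab, Nat.count_eq_card_filter_range]
  have hM : 0 < M := Nat.pos_of_neZero M
  have hqM : q.val < M := ZMod.val_lt q
  have hdiv (t : ℕ) : (q.val + M * t) / M = t := by
    rw [Nat.add_mul_div_left _ _ hM, Nat.div_eq_of_lt hqM, zero_add]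
  have hval {t : ℕ} (ht : t < P * b * L) :
      ((q.val + M * t : ℕ) : ZMod n).val = q.val + M * t := by
    apply ZMod.val_cast_of_lt
    rw [hn]
    nlinarith
  have hπ (y : ZMod n) : π y = q ↔ y.val % M = q.val := by
    rw [← ZMod.val_ringHom_apply π, (ZMod.val_injective M).eq_iff]
  refine card_nbij' (fun y => y.val / M) (fun t => ((q.val + M * t : ℕ) : ZMod n)) ?_ ?_ ?_ ?_
  · intro y hy
    simp only [coe_filter, digitLtSet, mem_filter, mem_univ, true_and, Set.mem_ofPred_eq] at hy
    simp only [coe_filter, mem_range, Set.mem_ofPred_eq]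
    refine ⟨(Nat.div_lt_iff_lt_mul hM).2 ?_, by rw [Nat.div_div_eq_div_mul]; exact hy.1⟩
    rw [mul_comm, ← hn]
    exact ZMod.val_lt y
  · intro t ht
    simp only [coe_filter, mem_range, Set.mem_ofPred_eq] at ht
    simp only [coe_filter, digitLtSet, mem_filter, mem_univ, true_and, Set.mem_ofPred_eq, hπ,
      hval ht.1, ← Nat.div_div_eq_div_mul, hdiv, Nat.add_mul_mod_self_left, Nat.mod_eq_of_lt hqM,
      and_true]
    exact ht.2
  · intro y hy
    simp only [coe_filter, digitLtSet, mem_filter, mem_univ, true_and, Set.mem_ofPred_eq, hπ] at hy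
    simp only [← hy.2, Nat.mod_add_div, ZMod.natCast_zmod_val]
  · intro t ht
    simp only [coe_filter, mem_range, Set.mem_ofPred_eq] at ht
    simp only [hval ht.1, hdiv]

lemma card_filter_add_mem_digitLtSet {f b m a i j : ℕ} [NeZero (b ^ m * f)] (hab : a ≤ b)
    (hij : i < j) (hjm : j < m) (g : ZMod (b ^ m * f)) :
    #{y ∈ digitLtSet (b ^ m * f) (b ^ j * f) b a | g + y ∈ digitLtSet (b ^ m * f) (b ^ i * f) b a}
      = a ^ 2 * b ^ (m - 2) * f := by
  have hN : b ^ m * f = b ^ i * f * b * (b ^ (j - 1 - i) * b * b ^ (m - 1 - j)) := by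
    rw [show b ^ m = b ^ i * b * b ^ (j - 1 - i) * b * b ^ (m - 1 - j) by
      simp only [← pow_succ, ← pow_add]; congr 1; omega]
    ring
  have hK : b ^ j * f = b ^ i * f * b * b ^ (j - 1 - i) := by
    rw [show b ^ j = b ^ i * b * b ^ (j - 1 - i) by
      simp only [← pow_succ, ← pow_add]; congr 1; omega]
    ring
  have hdvd : b ^ i * f * b ∣ b ^ m * f := Dvd.intro _ hN.symm
  have : NeZero (b ^ i * f * b) := ⟨ne_zero_of_dvd_ne_zero (NeZero.ne _) hdvd⟩
  let π := ZMod.castHom hdvd (ZMod (b ^ i * f * b))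
  rw [hK, card_filter_add_mem_of_preimage π (mem_digitLtSet_iff_ringHom π)
    (card_digitLtSet_fiber hN hab π) g, card_digitLtSet (L := 1) (mul_one _).symm hab,
    show m - 2 = i + (j - 1 - i) + (m - 1 - j) by omega, pow_add, pow_add]
  ring

/-- for `f ≥ 1`, `b, m ≥ 2` and `1 ≤ a < b`, there exists a non-disjoint
`(bᵐf, m, a·b^{m-1}·f, a²·b^{m-2}·f)`-PSEDF in `ℤ_{bᵐf}`. -/
theorem stmt_10 (f b m a : ℕ) (hf : 1 ≤ f) (hb : 2 ≤ b) (ha₂ : a < b) :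
    haveI : NeZero (b ^ m * f) := ⟨(Nat.mul_pos (pow_pos (by omega) m) (by omega)).ne'⟩
    ∃ A : Fin m → Finset (ZMod (b ^ m * f)),
      (∀ i, (A i).card = a * b ^ (m - 1) * f) ∧
      ∀ i j, i ≠ j → extDiff (A i) (A j)
        = (a ^ 2 * b ^ (m - 2) * f) • (Finset.univ : Finset (ZMod (b ^ m * f))).val := by
  have : NeZero (b ^ m * f) := ⟨(Nat.mul_pos (pow_pos (by omega) m) (by omega)).ne'⟩
  refine ⟨fun k => digitLtSet (b ^ m * f) (b ^ (k : ℕ) * f) b a, fun k => ?_, fun i j hij => ?_⟩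
  · have hN : b ^ m * f = b ^ (k : ℕ) * f * b * b ^ (m - 1 - k) := by
      rw [show b ^ m = b ^ (k : ℕ) * b * b ^ (m - 1 - k) by
        simp only [← pow_succ, ← pow_add]; congr 1; omega]
      ring
    rw [card_digitLtSet hN ha₂.le,
      show b ^ (m - 1) = b ^ (k : ℕ) * b ^ (m - 1 - k) by rw [← pow_add]; congr 1; omega]
    ring
  · apply extDiff_eq_nsmul_univ
    rcases lt_or_gt_of_ne hij with h | h
    · exact card_filter_add_mem_digitLtSet ha₂.le h j.isLt
    · intro g
      rw [card_filter_add_mem_comm]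
      exact card_filter_add_mem_digitLtSet ha₂.le h i.isLt _
end

section
/- Let v = ab for natural numbers a, b ≥ 2. Then for any integers k_1, k_2 with 1 ≤ k_1 ≤ b−1 and 1 ≤ k_2 ≤ a−1, there exists a non-disjoint (v, 2, k_1·a, k_2·b)-GPSEDF in ℤ_v, i.e. two subsets A, B ⊆ ℤ_v with |A| = k_1a, |B| = k_2b and Δ(A,B) = Δ(B,A) = k_1k_2 ℤ_v as multisets. -/
open Finset
open scoped Pointwise

theorem Multiset.bind_const {α β : Type*} (s : Multiset α) (t : Multiset β) :
    (s.bind fun _ => t) = Multiset.card s • t := by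
  simp [Multiset.bind, Multiset.join, Multiset.sum_replicate]

theorem Finset.univ_val_map_add_right {G : Type*} [AddGroup G] [Fintype G] (g : G) :
    (univ : Finset G).val.map (· + g) = univ.val :=
  Multiset.map_univ_val_equiv (Equiv.addRight g)

section ExtDiff

variable {G : Type*} [AddCommGroup G]

theorem extDiff_swap (A B : Finset G) : extDiff B A = (extDiff A B).map Neg.neg := by
  simp only [extDiff, Multiset.map_bind, Multiset.map_map, Function.comp_def, neg_sub]
  exact (Multiset.bind_map_comm A.val B.val).symm

theorem extDiff_swap_eq_nsmul_univ [Fintype G] {A B : Finset G} {n : ℕ}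
    (h : extDiff A B = n • (univ : Finset G).val) :
    extDiff B A = n • (univ : Finset G).val := by
  rw [extDiff_swap, h, Multiset.map_nsmul]
  exact congrArg _ (Multiset.map_univ_val_equiv (Equiv.neg G))

variable [DecidableEq G]

theorem val_add_of_injOn {S T : Finset G}
    (h : Set.InjOn (fun p : G × G => p.1 + p.2) (S ×ˢ T : Set (G × G))) :
    (S + T).val = S.val.bind fun s => T.val.map (s + ·) := by
  rw [← image_add_product, image_val_of_injOn (by rwa [coe_product]), product_val]
  simp only [SProd.sprod, Multiset.product, Multiset.map_bind, Multiset.map_map,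
    Function.comp_def]

theorem card_add_of_subset {H K S T : Finset G}
    (hinj : Set.InjOn (fun p : G × G => p.1 + p.2) (H ×ˢ K : Set (G × G)))
    (hS : S ⊆ H) (hT : T ⊆ K) :
    #(S + T) = #S * #T :=
  card_add_iff.2 (hinj.mono (Set.prod_mono (coe_subset.2 hS) (coe_subset.2 hT)))

theorem extDiff_add_add {H S T K : Finset G}
    (hHS : Set.InjOn (fun p : G × G => p.1 + p.2) (H ×ˢ S : Set (G × G)))
    (hTK : Set.InjOn (fun p : G × G => p.1 + p.2) (T ×ˢ K : Set (G × G))) :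
    extDiff (H + S) (T + K) =
      S.val.bind fun s => T.val.bind fun t => (extDiff H K).map (· + (s - t)) := by
  simp only [extDiff, val_add_of_injOn hHS, val_add_of_injOn hTK, Multiset.bind_assoc,
    Multiset.bind_map, Multiset.map_bind, Multiset.map_map, Function.comp_def]
  rw [Multiset.bind_bind]
  refine Multiset.bind_congr fun s _ => ?_
  rw [Multiset.bind_bind]
  exact Multiset.bind_congr fun t _ => Multiset.bind_congr fun h _ =>
    Multiset.map_congr rfl fun k _ => by abel

variable [Fintype G]

theorem extDiff_eq_univ_of_injOn_add {H K : Finset G}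
    (hinj : Set.InjOn (fun p : G × G => p.1 + p.2) (H ×ˢ K : Set (G × G)))
    (hcard : #H * #K = Fintype.card G) :
    extDiff H K = (univ : Finset G).val := by
  have hsub : Set.InjOn (fun p : G × G => p.1 - p.2) ↑(H ×ˢ K) := by
    rintro ⟨h, k⟩ hp ⟨h', k'⟩ hp' heq
    simp only [coe_product, Set.mem_prod, mem_coe] at hp hp' heq
    have := @hinj (h, k') ⟨hp.1, hp'.2⟩ (h', k) ⟨hp'.1, hp.2⟩ (sub_eq_sub_iff_add_eq_add.1 heq)
    simp_all
  have himage : (H ×ˢ K).image (fun p : G × G => p.1 - p.2) = univ :=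
    eq_univ_of_card _ (by rw [card_image_of_injOn hsub, card_product, hcard])
  rw [← himage, image_val_of_injOn hsub, product_val]
  simp only [extDiff, SProd.sprod, Multiset.product, Multiset.map_bind, Multiset.map_map,
    Function.comp_def]

theorem extDiff_add_add_eq_nsmul_univ {H K S T : Finset G}
    (hinj : Set.InjOn (fun p : G × G => p.1 + p.2) (H ×ˢ K : Set (G × G)))
    (hcard : #H * #K = Fintype.card G) (hS : S ⊆ K) (hT : T ⊆ H) :
    extDiff (H + S) (T + K) = (#S * #T) • (univ : Finset G).val := by
  rw [extDiff_add_add (hinj.mono (Set.prod_mono subset_rfl (coe_subset.2 hS)))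
    (hinj.mono (Set.prod_mono (coe_subset.2 hT) subset_rfl)),
    extDiff_eq_univ_of_injOn_add hinj hcard]
  simp only [univ_val_map_add_right, Multiset.bind_const, mul_smul, card_val]

end ExtDiff

theorem ZMod.natCast_mul_add_inj {a b t t' r r' : ℕ} (ht : t < a) (ht' : t' < a)
    (hr : r < b) (hr' : r' < b)
    (h : (t : ZMod (a * b)) * b + r = t' * b + r') : t = t' ∧ r = r' := by
  have hlt : ∀ {t r : ℕ}, t < a → r < b → t * b + r < a * b := fun ht hr => by nlinarith
  have hnat : t * b + r = t' * b + r' := by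
    have h' : ((t * b + r : ℕ) : ZMod (a * b)) = ((t' * b + r' : ℕ) : ZMod (a * b)) := by
      push_cast; exact h
    rwa [ZMod.natCast_eq_natCast_iff', Nat.mod_eq_of_lt (hlt ht hr),
      Nat.mod_eq_of_lt (hlt ht' hr')] at h'
  have hb : 0 < b := by omega
  obtain ⟨hdiv, hmod⟩ := (Nat.div_mod_unique (a := t * b + r) (d := t) (c := r) hb).2
    ⟨by ring, hr⟩
  obtain ⟨hdiv', hmod'⟩ := (Nat.div_mod_unique (a := t * b + r) (d := t') (c := r') hb).2
    ⟨by rw [hnat]; ring, hr'⟩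
  exact ⟨hdiv.symm.trans hdiv', hmod.symm.trans hmod'⟩

section MixedRadix

variable {a b : ℕ}

def castRange (a b m : ℕ) : Finset (ZMod (a * b)) := (range m).image (↑)

def castRangeMul (a b m : ℕ) : Finset (ZMod (a * b)) :=
  (range m).image fun t : ℕ => (t : ZMod (a * b)) * b

theorem castRange_mono {m m' : ℕ} (h : m ≤ m') : castRange a b m ⊆ castRange a b m' :=
  image_subset_image (range_subset_range.2 h)

theorem castRangeMul_mono {m m' : ℕ} (h : m ≤ m') : castRangeMul a b m ⊆ castRangeMul a b m' :=
  image_subset_image (range_subset_range.2 h)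

theorem card_castRange {m : ℕ} (ha : 0 < a) (hm : m ≤ b) : #(castRange a b m) = m := by
  rw [castRange, card_image_of_injOn, card_range]
  intro r hr r' hr' h
  simp only [coe_range, Set.mem_Iio] at hr hr'
  exact (ZMod.natCast_mul_add_inj ha ha (hr.trans_le hm) (hr'.trans_le hm)
    (by simpa using h)).2

theorem card_castRangeMul {m : ℕ} (hb : 0 < b) (hm : m ≤ a) : #(castRangeMul a b m) = m := by
  rw [castRangeMul, card_image_of_injOn, card_range]
  intro t ht t' ht' h
  simp only [coe_range, Set.mem_Iio] at ht ht'
  exact (ZMod.natCast_mul_add_inj (ht.trans_le hm) (ht'.trans_le hm) hb hb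
    (by simpa using h)).1

theorem injOn_add_castRangeMul_castRange :
    Set.InjOn (fun p : ZMod (a * b) × ZMod (a * b) => p.1 + p.2)
      (castRangeMul a b a ×ˢ castRange a b b : Set _) := by
  rintro ⟨_, _⟩ ⟨hh, hk⟩ ⟨_, _⟩ ⟨hh', hk'⟩ h
  simp only [castRangeMul, castRange, coe_image, coe_range, Set.mem_image, Set.mem_Iio]
    at hh hk hh' hk'
  obtain ⟨t, ht, rfl⟩ := hh
  obtain ⟨r, hr, rfl⟩ := hk
  obtain ⟨t', ht', rfl⟩ := hh'
  obtain ⟨r', hr', rfl⟩ := hk'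
  obtain ⟨rfl, rfl⟩ := ZMod.natCast_mul_add_inj ht ht' hr hr' h
  rfl

end MixedRadix

/-- let `v = ab` with `a, b ≥ 2`.  For any `1 ≤ k₁ ≤ b-1` and
`1 ≤ k₂ ≤ a-1` there exists a non-disjoint `(v, 2, k₁a, k₂b)`-GPSEDF in `ℤ_v`:
two subsets `A, B ⊆ ℤ_v` with `|A| = k₁a`, `|B| = k₂b` and
`Δ(A,B) = Δ(B,A) = k₁k₂·ℤ_v` as multisets. -/
theorem stmt_12 (a b k₁ k₂ : ℕ) (ha : 2 ≤ a) (hb : 2 ≤ b)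
    (hk₁' : k₁ ≤ b - 1) (hk₂' : k₂ ≤ a - 1) :
    haveI : NeZero (a * b) := ⟨by positivity⟩
    ∃ A B : Finset (ZMod (a * b)),
      A.card = k₁ * a ∧ B.card = k₂ * b ∧
      extDiff A B = (k₁ * k₂) • (Finset.univ : Finset (ZMod (a * b))).val ∧
      extDiff B A = (k₁ * k₂) • (Finset.univ : Finset (ZMod (a * b))).val := by
  have : NeZero (a * b) := ⟨by positivity⟩
  have ha0 : 0 < a := by omega
  have hb0 : 0 < b := by omega
  have hinj := injOn_add_castRangeMul_castRange (a := a) (b := b)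
  have hcard : #(castRangeMul a b a) * #(castRange a b b) = Fintype.card (ZMod (a * b)) := by
    rw [card_castRangeMul hb0 le_rfl, card_castRange ha0 le_rfl, ZMod.card]
  have hS : castRange a b k₁ ⊆ castRange a b b := castRange_mono (by omega)
  have hT : castRangeMul a b k₂ ⊆ castRangeMul a b a := castRangeMul_mono (by omega)
  have hAB := extDiff_add_add_eq_nsmul_univ hinj hcard hS hT
  rw [card_castRange ha0 (by omega), card_castRangeMul hb0 (by omega)] at hAB
  refine ⟨_, _, ?_, ?_, hAB, extDiff_swap_eq_nsmul_univ hAB⟩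
  · rw [card_add_of_subset hinj subset_rfl hS, card_castRangeMul hb0 le_rfl,
      card_castRange ha0 (by omega), mul_comm]
  · rw [card_add_of_subset hinj hT subset_rfl, card_castRangeMul hb0 (by omega),
      card_castRange ha0 le_rfl]
end
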